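/- Let n ≥ 1, k ∈ ℕ, N ∈ ℕ. Let f : ℝⁿ → ℂ be of class C^k such that for every multi-index α with |α| ≤ k there is a constant C_α with |∂^α f(x)| ≤ C_α (1+|x|)^{-N} for all x. Let g : ℝⁿ → ℂ be measurable, have vanishing moments of order k, and have decay order N+k+n+1. Let 1 ≤ p ≤ ∞ satisfy N·p > n (this holds automatically when p = ∞). Then there exists a constant C' > 0 such that for all t with 0 < t < 1 one has ‖g ∗ D_t f‖_{L^p(ℝⁿ)} ≤ C' · t^{k+n(1−1/p)}, where 1/p is read as 0 when p = ∞. -/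

import Mathlib

open MeasureTheory SchwartzMap Filter Topology FourierTransform
open scoped ENNReal ContDiff

noncomputable section

/-- Euclidean space ℝⁿ. -/
abbrev Euc (n : ℕ) := EuclideanSpace ℝ (Fin n)

/-- Convolution of two functions on ℝⁿ: (f ∗ g)(x) = ∫ f(y) g(x − y) dy. -/
def conv {n : ℕ} (f g : Euc n → ℂ) : Euc n → ℂ := fun x => ∫ y, f y * g (x - y)

/-- L¹-normalized dilation: (D_t f)(x) = tⁿ f(t x). -/
def dil (n : ℕ) (t : ℝ) (f : Euc n → ℂ) : Euc n → ℂ := fun x => (t ^ n : ℝ) • f (t • x)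

/-- f^*(x) = conj (f (−x)). -/
def starF {n : ℕ} (f : Euc n → ℂ) : Euc n → ℂ := fun x => (starRingEnd ℂ) (f (-x))

/-- The monomial x ↦ x^α for a multi-index α. -/
def monom {n : ℕ} (α : Fin n → ℕ) (x : Euc n) : ℂ := ∏ i, (x i : ℂ) ^ α i

/-- f has vanishing moments of order k: ∫ f(x) x^α dx = 0 (converging absolutely)
for all multi-indices α with |α| ≤ k − 1, i.e. |α| < k. -/
def HasVanishingMoments {n : ℕ} (k : ℕ) (f : Euc n → ℂ) : Prop :=
  ∀ α : Fin n → ℕ, (∑ i, α i) < k →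
    Integrable (fun x => f x * monom α x) ∧ (∫ x, f x * monom α x) = 0

/-- All moments of f vanish (with absolute convergence of all the integrals). -/
def AllMomentsVanish {n : ℕ} (f : Euc n → ℂ) : Prop :=
  ∀ α : Fin n → ℕ,
    Integrable (fun x => f x * monom α x) ∧ (∫ x, f x * monom α x) = 0

/-- f has decay order N: |f(x)| ≤ C (1 + |x|)^{−N}. -/
def HasDecayOrder {n : ℕ} (N : ℕ) (f : Euc n → ℂ) : Prop :=
  ∃ C : ℝ, ∀ x, ‖f x‖ ≤ C / (1 + ‖x‖) ^ N

/-- Partial derivative in the i-th coordinate direction. -/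
def pd {n : ℕ} (i : Fin n) (f : Euc n → ℂ) : Euc n → ℂ :=
  fun x => fderiv ℝ f x (EuclideanSpace.single i (1 : ℝ))

/-- Iterated partial derivative ∂^α along a multi-index α. -/
def mderiv {n : ℕ} (α : Fin n → ℕ) (f : Euc n → ℂ) : Euc n → ℂ :=
  (List.finRange n).foldr (fun i g => (pd i)^[α i] g) f

/-- Schwartz-type seminorm (valued in [0,∞]): sup over x of (1+|x|)^k ‖D^m f(x)‖. -/
def schwartzSemi {n : ℕ} (k m : ℕ) (f : Euc n → ℂ) : ℝ≥0∞ :=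
  ⨆ x, ENNReal.ofReal ((1 + ‖x‖) ^ k * ‖iteratedFDeriv ℝ m f x‖)

/-- Convergence in the topology of the Schwartz space, along a filter `l`:
all Schwartz seminorms of the difference tend to 0. -/
def TendstoSchwartz {n : ℕ} {ι : Type*} (l : Filter ι) (F : ι → Euc n → ℂ)
    (f : Euc n → ℂ) : Prop :=
  ∀ k m : ℕ, Tendsto (fun N => schwartzSemi k m (fun x => F N x - f x)) l (nhds 0)

/-- A pair (ψ, η) of Schwartz functions is LP-admissible: for every Schwartz function f
with all moments vanishing, ∑_{|j| ≤ N} f ∗ ψ_j^* ∗ η_j → f in the Schwartz topology. -/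
def LPAdmissible {n : ℕ} (ψ η : 𝓢(Euc n, ℂ)) : Prop :=
  ∀ f : 𝓢(Euc n, ℂ), AllMomentsVanish (⇑f) →
    TendstoSchwartz atTop
      (fun N : ℕ => fun x => ∑ j ∈ Finset.Icc (-(N : ℤ)) (N : ℤ),
        conv (conv (⇑f) (starF (dil n ((2:ℝ) ^ j) (⇑ψ)))) (dil n ((2:ℝ) ^ j) (⇑η)) x)
      (⇑f)

/-- A Schwartz function ψ is admissible: for every Schwartz f with all moments vanishing,
∫_ε^A f ∗ D_a(ψ^* ∗ ψ) da/a → f in the Schwartz topology as ε → 0⁺, A → ∞. -/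
def Admissible {n : ℕ} (ψ : 𝓢(Euc n, ℂ)) : Prop :=
  ∀ f : 𝓢(Euc n, ℂ), AllMomentsVanish (⇑f) →
    TendstoSchwartz ((nhdsWithin (0:ℝ) (Set.Ioi 0)) ×ˢ (atTop : Filter ℝ))
      (fun εA : ℝ × ℝ => fun x =>
        ∫ a in Set.Ioc εA.1 εA.2, conv (⇑f) (dil n a (conv (starF ⇑ψ) ⇑ψ)) x / (a : ℂ))
      (⇑f)

/-!
Write `z = t • x` and `v = -t • y`, so that `(g ∗ D_t f)(x) = tⁿ ∫ g(y) f(z + v) dy`. The vanishing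
moments of `g` annihilate the Taylor polynomial of `f` at `z` of degree `< k`, and the Taylor
remainder is at most `|v|ᵏ = tᵏ|y|ᵏ` times the supremum of `‖Dᵏ f‖` on the segment `[z, z + v]`,
which by Peetre's inequality is `≲ (1 + |y|)ᴺ (1 + |z|)⁻ᴺ`. The decay of `g` of order
`N + k + n + 1` absorbs `|y|ᵏ (1 + |y|)ᴺ` and leaves an integrable factor, whence
`|(g ∗ D_t f)(x)| ≲ t^{n+k} (1 + t|x|)⁻ᴺ`. In the `Lᵖ` norm the dilation `x ↦ t • x` costs
`t^{-n/p}`, and `(1 + |u|)⁻ᴺ` lies in `Lᵖ` because `N p > n`.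

The hypothesis only controls the partial derivatives `∂^α f` taken in one fixed order of the
coordinates; bounding the full `k`-th derivative `Dᵏ f` from them uses the symmetry of iterated
derivatives of a `Cᵏ` function.
-/

section DirDeriv

variable {E F : Type*} [NormedAddCommGroup E] [NormedSpace ℝ E]
  [NormedAddCommGroup F] [NormedSpace ℝ F]

def iteratedDirDeriv (l : List E) (f : E → F) : E → F :=
  l.foldr (fun u g x => fderiv ℝ g x u) f

@[simp] lemma iteratedDirDeriv_nil (f : E → F) : iteratedDirDeriv [] f = f := rfl

@[simp] lemma iteratedDirDeriv_cons (u : E) (l : List E) (f : E → F) :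
    iteratedDirDeriv (u :: l) f = fun x => fderiv ℝ (iteratedDirDeriv l f) x u := rfl

lemma iteratedDirDeriv_append (l₁ l₂ : List E) (f : E → F) :
    iteratedDirDeriv (l₁ ++ l₂) f = iteratedDirDeriv l₁ (iteratedDirDeriv l₂ f) := by
  simp [iteratedDirDeriv, List.foldr_append]

lemma iteratedDirDeriv_replicate (m : ℕ) (u : E) (f : E → F) :
    iteratedDirDeriv (List.replicate m u) f = (fun g x => fderiv ℝ g x u)^[m] f := by
  induction m with
  | zero => rfl
  | succ m ih => rw [List.replicate_succ, iteratedDirDeriv_cons, ih, Function.iterate_succ_apply']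

lemma ContDiff.fderiv_apply_const {m : ℕ} {f : E → F} (hf : ContDiff ℝ (m + 1 : ℕ) f) (u : E) :
    ContDiff ℝ m (fun x => fderiv ℝ f x u) :=
  (hf.fderiv_right (by norm_cast)).clm_apply contDiff_const

lemma ContDiff.iteratedDirDeriv {m : ℕ} {f : E → F} (l : List E)
    (hf : ContDiff ℝ (m + l.length : ℕ) f) : ContDiff ℝ m (iteratedDirDeriv l f) := by
  induction l generalizing m with
  | nil => simpa using hf
  | cons u l ih =>
    exact (ih (by rwa [List.length_cons, ← add_assoc, add_right_comm] at hf)).fderiv_apply_const u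

lemma fderiv_apply_comm {f : E → F} (hf : ContDiff ℝ 2 f) (u w : E) :
    (fun x => fderiv ℝ (fun y => fderiv ℝ f y w) x u)
      = fun x => fderiv ℝ (fun y => fderiv ℝ f y u) x w := by
  funext x
  have hdiff : DifferentiableAt ℝ (fderiv ℝ f) x :=
    (hf.fderiv_right (m := 1) (by norm_num)).differentiable (by norm_num) x
  rw [fderiv_clm_apply hdiff (differentiableAt_const w),
    fderiv_clm_apply hdiff (differentiableAt_const u)]
  simpa using (hf.contDiffAt.isSymmSndFDerivAt (by simp)) u w

lemma iteratedDirDeriv_perm {l l' : List E} (hp : l.Perm l') {f : E → F}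
    (hf : ContDiff ℝ l.length f) : iteratedDirDeriv l f = iteratedDirDeriv l' f := by
  induction hp with
  | nil => rfl
  | cons u _ ih =>
    rw [iteratedDirDeriv_cons, iteratedDirDeriv_cons, ih (hf.of_le (by simp))]
  | swap u w l =>
    have h2 : ContDiff ℝ 2 (iteratedDirDeriv l f) :=
      ContDiff.iteratedDirDeriv l (by convert hf using 2; simp; ring)
    simp only [iteratedDirDeriv_cons]
    exact fderiv_apply_comm h2 w u
  | trans h₁ _ ih₁ ih₂ => rw [ih₁ hf, ih₂ (by rwa [← h₁.length_eq])]

lemma iteratedFDeriv_apply_eq_iteratedDirDeriv {j : ℕ} {f : E → F} (hf : ContDiff ℝ j f)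
    (v : Fin j → E) (x : E) :
    iteratedFDeriv ℝ j f x v = iteratedDirDeriv (List.ofFn v) f x := by
  induction j generalizing f with
  | zero => simp
  | succ j ih =>
    have hfd : ContDiff ℝ j (fderiv ℝ f) := hf.fderiv_right (by norm_cast)
    have hlast : iteratedFDeriv ℝ (j + 1) f x v
        = iteratedFDeriv ℝ j (fun y => fderiv ℝ f y (v (Fin.last j))) x (Fin.init v) := by
      rw [iteratedFDeriv_succ_apply_right]
      change _ = iteratedFDeriv ℝ j
        ((ContinuousLinearMap.apply ℝ F (v (Fin.last j))) ∘ fderiv ℝ f) x (Fin.init v)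
      rw [ContinuousLinearMap.iteratedFDeriv_comp_left _ hfd.contDiffAt le_rfl]
      rfl
    rw [hlast, ih (hf.fderiv_apply_const _), List.ofFn_succ', List.concat_eq_append,
      iteratedDirDeriv_append]
    rfl

end DirDeriv

open Finset

section Coordinates

variable {n : ℕ}

def multiIndex {j : ℕ} (ι : Fin j → Fin n) (i : Fin n) : ℕ := #{s | ι s = i}

lemma sum_multiIndex {j : ℕ} (ι : Fin j → Fin n) : ∑ i, multiIndex ι i = j := by
  simpa [multiIndex] using (Finset.card_eq_sum_card_fiberwise (f := ι) (s := univ) (t := univ)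
    (fun s _ => Finset.mem_univ (ι s))).symm

lemma prod_apply_eq_monom {j : ℕ} (ι : Fin j → Fin n) (y : Euc n) :
    ∏ s, (y (ι s) : ℂ) = monom (multiIndex ι) y := by
  unfold monom multiIndex
  rw [Finset.prod_comp (fun i => (y i : ℂ)) ι]
  refine Finset.prod_subset (Finset.subset_univ _) fun i _ hi => ?_
  have hempty : ({s | ι s = i} : Finset (Fin j)) = ∅ :=
    Finset.filter_eq_empty_iff.mpr fun s _ h => hi (h ▸ Finset.mem_image_of_mem ι (mem_univ s))
  rw [hempty, Finset.card_empty, pow_zero]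

def coordDirs (α : Fin n → ℕ) : List (Euc n) :=
  (List.finRange n).flatMap fun i => List.replicate (α i) (EuclideanSpace.single i 1)

lemma mderiv_eq_iteratedDirDeriv (α : Fin n → ℕ) (f : Euc n → ℂ) :
    mderiv α f = iteratedDirDeriv (coordDirs α) f := by
  unfold mderiv coordDirs
  induction List.finRange n with
  | nil => rfl
  | cons i L ih =>
    rw [List.foldr_cons, ih, List.flatMap_cons, iteratedDirDeriv_append,
      iteratedDirDeriv_replicate]
    rfl

lemma perm_ofFn_single_coordDirs {j : ℕ} (ι : Fin j → Fin n) :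
    (List.ofFn fun s => EuclideanSpace.single (ι s) (1 : ℝ)).Perm (coordDirs (multiIndex ι)) := by
  have hdirs : coordDirs (multiIndex ι) = ((List.finRange n).flatMap fun i =>
      List.replicate (multiIndex ι i) i).map fun i => EuclideanSpace.single i (1 : ℝ) := by
    simp [coordDirs, List.map_flatMap, List.map_replicate]
  rw [hdirs, show (List.ofFn fun s => EuclideanSpace.single (ι s) (1 : ℝ))
    = (List.ofFn ι).map fun i => EuclideanSpace.single i (1 : ℝ) by rw [List.map_ofFn]; rfl]
  refine List.Perm.map _ (List.perm_iff_count.mpr fun a => ?_)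
  rw [List.count_flatMap]
  simpa [List.count_replicate, ← Fin.sum_univ_def, multiIndex] using
    (Fin.card_filter_univ_eq_vector_get_eq_count a (List.Vector.ofFn ι)).symm

lemma iteratedFDeriv_apply_single_eq_mderiv {j : ℕ} {f : Euc n → ℂ} (hf : ContDiff ℝ j f)
    (ι : Fin j → Fin n) (x : Euc n) :
    iteratedFDeriv ℝ j f x (fun s => EuclideanSpace.single (ι s) 1)
      = mderiv (multiIndex ι) f x := by
  rw [iteratedFDeriv_apply_eq_iteratedDirDeriv hf, mderiv_eq_iteratedDirDeriv,
    iteratedDirDeriv_perm (perm_ofFn_single_coordDirs ι) (by rwa [List.length_ofFn])]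

lemma ContinuousMultilinearMap.apply_eq_sum_single {j : ℕ}
    (D : ContinuousMultilinearMap ℝ (fun _ : Fin j => Euc n) ℂ) (m : Fin j → Euc n) :
    D m = ∑ ι : Fin j → Fin n, (∏ s, m s (ι s)) • D (fun s => EuclideanSpace.single (ι s) 1) := by
  conv_lhs => rw [show m = fun s => ∑ i, m s i • EuclideanSpace.single i (1 : ℝ) from
    funext fun s => by simpa using ((EuclideanSpace.basisFun (Fin n) ℝ).sum_repr (m s)).symm]
  rw [D.map_sum]
  exact Finset.sum_congr rfl fun ι _ => D.map_smul_univ _ _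

end Coordinates

lemma norm_iteratedFDeriv_le_of_norm_mderiv_le {n j N : ℕ} {f : Euc n → ℂ} (hf : ContDiff ℝ j f)
    (hd : ∀ α : Fin n → ℕ, (∑ i, α i) = j →
      ∃ Cα : ℝ, ∀ x, ‖mderiv α f x‖ ≤ Cα / (1 + ‖x‖) ^ N) :
    ∃ M : ℝ, 0 ≤ M ∧ ∀ x, ‖iteratedFDeriv ℝ j f x‖ ≤ M / (1 + ‖x‖) ^ N := by
  choose C hC using fun ι : Fin j → Fin n => hd (multiIndex ι) (sum_multiIndex ι)
  have hC0 (ι : Fin j → Fin n) : 0 ≤ C ι := by simpa using (norm_nonneg _).trans (hC ι 0)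
  have hM0 : 0 ≤ ∑ ι, C ι := Finset.sum_nonneg fun ι _ => hC0 ι
  refine ⟨∑ ι, C ι, hM0, fun x => ?_⟩
  refine ContinuousMultilinearMap.opNorm_le_bound (by positivity) fun m => ?_
  rw [ContinuousMultilinearMap.apply_eq_sum_single, Finset.sum_div, Finset.sum_mul]
  refine (norm_sum_le _ _).trans (Finset.sum_le_sum fun ι _ => ?_)
  rw [norm_smul, iteratedFDeriv_apply_single_eq_mderiv hf, norm_prod, mul_comm]
  gcongr
  · exact (norm_nonneg _).trans (hC ι x)
  · exact hC ι x
  · exact PiLp.norm_apply_le _ _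

section Taylor

variable {E F : Type*} [NormedAddCommGroup E] [NormedSpace ℝ E]
  [NormedAddCommGroup F] [NormedSpace ℝ F]

open Nat

def taylorPoly (f : E → F) (k : ℕ) (z v : E) : F :=
  ∑ j ∈ Finset.range k, (j ! : ℝ)⁻¹ • iteratedFDeriv ℝ j f z (fun _ => v)

lemma iteratedDeriv_comp_add_smul {j : ℕ} {f : E → F} (hf : ContDiff ℝ j f) (z v : E) (s : ℝ) :
    iteratedDeriv j (fun s : ℝ => f (z + s • v)) s
      = iteratedFDeriv ℝ j f (z + s • v) (fun _ => v) := by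
  have hline : (fun s : ℝ => f (z + s • v))
      = (fun y => f (z + y)) ∘ ContinuousLinearMap.smulRight (1 : ℝ →L[ℝ] ℝ) v := by
    funext s; simp
  have hshift : ContDiff ℝ j fun y => f (z + y) := hf.comp (contDiff_const.add contDiff_id)
  rw [iteratedDeriv_eq_iteratedFDeriv, hline,
    ContinuousLinearMap.iteratedFDeriv_comp_right (f := fun y => f (z + y)) _ hshift _ le_rfl]
  simp [iteratedFDeriv_comp_add_left]

lemma norm_sub_taylorPoly_le {k : ℕ} {f : E → F} (hf : ContDiff ℝ k f) (z v : E) {C : ℝ}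
    (hC : ∀ s ∈ Set.Icc (0 : ℝ) 1, ‖iteratedFDeriv ℝ k f (z + s • v)‖ ≤ C) :
    ‖f (z + v) - taylorPoly f k z v‖ ≤ C * ‖v‖ ^ k := by
  have hC0 : 0 ≤ C := (norm_nonneg _).trans (hC 0 (by simp))
  set γ : ℝ → F := fun s => f (z + s • v)
  have hγ : ContDiff ℝ k γ := hf.comp (contDiff_const.add (contDiff_id.smul contDiff_const))
  have hderiv {j : ℕ} (hj : j ≤ k) {s : ℝ} (hs : s ∈ Set.Icc (0 : ℝ) 1) :
      iteratedDerivWithin j γ (Set.Icc 0 1) s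
        = iteratedFDeriv ℝ j f (z + s • v) (fun _ => v) := by
    rw [iteratedDerivWithin_eq_iteratedDeriv (uniqueDiffOn_Icc zero_lt_one)
      ((hγ.of_le (by exact_mod_cast hj)).contDiffAt) hs,
      iteratedDeriv_comp_add_smul (hf.of_le (by exact_mod_cast hj))]
  rcases Nat.eq_zero_or_pos k with rfl | hk
  · simpa [taylorPoly] using hC 1 (by simp)
  obtain ⟨m, rfl⟩ : ∃ m, k = m + 1 := ⟨k - 1, by omega⟩
  have hbound : ∀ s ∈ Set.Icc (0 : ℝ) 1,
      ‖iteratedDerivWithin (m + 1) γ (Set.Icc 0 1) s‖ ≤ C * ‖v‖ ^ (m + 1) := fun s hs => by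
    rw [hderiv le_rfl hs]
    refine ((iteratedFDeriv ℝ (m + 1) f (z + s • v)).le_opNorm _).trans ?_
    simpa using mul_le_mul_of_nonneg_right (hC s hs) (by positivity)
  have htaylor : taylorWithinEval γ m (Set.Icc 0 1) 0 1 = taylorPoly f (m + 1) z v := by
    rw [taylor_within_apply, taylorPoly]
    refine Finset.sum_congr rfl fun j hj => ?_
    rw [hderiv (by simp at hj; omega) (by simp)]
    simp
  calc ‖f (z + v) - taylorPoly f (m + 1) z v‖
      = ‖γ 1 - taylorWithinEval γ m (Set.Icc 0 1) 0 1‖ := by simp [γ, htaylor]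
    _ ≤ C * ‖v‖ ^ (m + 1) * (1 - 0) ^ (m + 1) / m ! :=
      taylor_mean_remainder_bound zero_le_one hγ.contDiffOn (by simp) hbound
    _ ≤ C * ‖v‖ ^ (m + 1) := by
      simpa using _root_.div_le_self (by positivity) (by exact_mod_cast m.factorial_pos)

end Taylor

lemma integrable_sum_and_integral_sum_eq_zero {X ι G : Type*} [MeasurableSpace X] {μ : Measure X}
    [NormedAddCommGroup G] [NormedSpace ℝ G] (s : Finset ι) {F : ι → X → G}
    (hF : ∀ i ∈ s, Integrable (F i) μ ∧ ∫ x, F i x ∂μ = 0) :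
    Integrable (fun x => ∑ i ∈ s, F i x) μ ∧ ∫ x, ∑ i ∈ s, F i x ∂μ = 0 :=
  ⟨integrable_finsetSum s fun i hi => (hF i hi).1, by
    rw [integral_finsetSum s fun i hi => (hF i hi).1]
    exact Finset.sum_eq_zero fun i hi => (hF i hi).2⟩

namespace HasVanishingMoments

variable {n k : ℕ} {g : Euc n → ℂ}

lemma integral_mul_multilinear_eq_zero (hg : HasVanishingMoments k g) {j : ℕ} (hj : j < k)
    (D : ContinuousMultilinearMap ℝ (fun _ : Fin j => Euc n) ℂ) (c : ℝ) :
    Integrable (fun y => g y * D (fun _ => c • y)) ∧ ∫ y, g y * D (fun _ => c • y) = 0 := by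
  have hexpand : (fun y => g y * D (fun _ => c • y)) = fun y => ∑ ι : Fin j → Fin n,
      ((c : ℂ) ^ j * D (fun s => EuclideanSpace.single (ι s) 1))
        * (g y * monom (multiIndex ι) y) := by
    funext y
    rw [D.apply_eq_sum_single, Finset.mul_sum]
    refine Finset.sum_congr rfl fun ι _ => ?_
    simp only [PiLp.smul_apply, smul_eq_mul, Finset.prod_mul_distrib, Finset.prod_const,
      Finset.card_univ, Fintype.card_fin, ← prod_apply_eq_monom, Complex.real_smul]
    push_cast
    ring
  rw [hexpand]
  refine integrable_sum_and_integral_sum_eq_zero _ fun ι _ => ?_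
  obtain ⟨hint, hzero⟩ := hg (multiIndex ι) (by rw [sum_multiIndex]; exact hj)
  exact ⟨hint.const_mul _, by rw [integral_const_mul, hzero, mul_zero]⟩

lemma integral_mul_taylorPoly_eq_zero (hg : HasVanishingMoments k g) (f : Euc n → ℂ)
    (z : Euc n) (c : ℝ) :
    Integrable (fun y => g y * taylorPoly f k z (c • y)) ∧
      ∫ y, g y * taylorPoly f k z (c • y) = 0 := by
  simp only [taylorPoly, Finset.mul_sum, mul_smul_comm]
  refine integrable_sum_and_integral_sum_eq_zero _ fun j hj => ?_
  obtain ⟨hint, hzero⟩ := hg.integral_mul_multilinear_eq_zero (Finset.mem_range.mp hj)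
    (iteratedFDeriv ℝ j f z) c
  exact ⟨hint.smul _, by rw [integral_smul, hzero, smul_zero]⟩

end HasVanishingMoments

/-- Peetre's inequality. -/
lemma inv_one_add_norm_add_pow_le {E : Type*} [SeminormedAddCommGroup E] (N : ℕ) (a b : E) :
    ((1 + ‖a + b‖) ^ N)⁻¹ ≤ (1 + ‖b‖) ^ N * ((1 + ‖a‖) ^ N)⁻¹ := by
  have hpeetre : 1 + ‖a‖ ≤ (1 + ‖a + b‖) * (1 + ‖b‖) := by
    have := norm_sub_le (a + b) b
    rw [add_sub_cancel_right] at this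
    nlinarith [norm_nonneg (a + b), norm_nonneg b]
  rw [← div_eq_mul_inv, le_div_iff₀ (by positivity), inv_mul_le_iff₀ (by positivity), ← mul_pow]
  exact pow_le_pow_left₀ (by positivity) hpeetre N

section Decay

variable {E F : Type*} [NormedAddCommGroup E] [NormedSpace ℝ E]
  [NormedAddCommGroup F] [NormedSpace ℝ F]

lemma norm_sub_taylorPoly_le_of_decay {k N : ℕ} {f : E → F} (hf : ContDiff ℝ k f) {M : ℝ}
    (hM : ∀ w, ‖iteratedFDeriv ℝ k f w‖ ≤ M / (1 + ‖w‖) ^ N) (z v : E) :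
    ‖f (z + v) - taylorPoly f k z v‖ ≤ M * (1 + ‖v‖) ^ N / (1 + ‖z‖) ^ N * ‖v‖ ^ k := by
  have hM0 : 0 ≤ M := by simpa using (norm_nonneg _).trans (hM 0)
  refine norm_sub_taylorPoly_le hf z v fun s hs => (hM _).trans ?_
  have hsv : ‖s • v‖ ≤ ‖v‖ := by
    rw [norm_smul, Real.norm_of_nonneg hs.1]
    exact mul_le_of_le_one_left (norm_nonneg v) hs.2
  calc M / (1 + ‖z + s • v‖) ^ N
      ≤ M * ((1 + ‖s • v‖) ^ N * ((1 + ‖z‖) ^ N)⁻¹) := by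
        rw [div_eq_mul_inv]; gcongr; exact inv_one_add_norm_add_pow_le N z (s • v)
    _ ≤ M * (1 + ‖v‖) ^ N / (1 + ‖z‖) ^ N := by
        rw [mul_div_assoc, ← div_eq_mul_inv]; gcongr

lemma integrable_inv_one_add_norm_pow [MeasurableSpace E] [BorelSpace E] [FiniteDimensional ℝ E]
    {μ : Measure E} [μ.IsAddHaarMeasure] {m : ℕ} (hm : Module.finrank ℝ E < m) :
    Integrable (fun y : E => ((1 + ‖y‖) ^ m)⁻¹) μ := by
  refine (integrable_one_add_norm (μ := μ) (r := m) (by exact_mod_cast hm)).congr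
    (Eventually.of_forall fun y => ?_)
  simp [Real.rpow_neg (by positivity : (0 : ℝ) ≤ 1 + ‖y‖)]

end Decay

lemma HasDecayOrder.integrable {n m : ℕ} {g : Euc n → ℂ} (hg : HasDecayOrder m g) (hm : n < m)
    (hg_meas : Measurable g) : Integrable g := by
  obtain ⟨C, hC⟩ := hg
  refine ((integrable_inv_one_add_norm_pow (by simpa using hm)).const_mul C).mono'
    hg_meas.aestronglyMeasurable (Eventually.of_forall fun y => ?_)
  simpa [div_eq_mul_inv] using hC y

lemma conv_dil_apply {n : ℕ} (g f : Euc n → ℂ) (t : ℝ) (x : Euc n) :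
    conv g (dil n t f) x = (t ^ n : ℝ) • ∫ y, g y * f (t • x + (-t) • y) := by
  simp only [conv, dil, mul_smul_comm, smul_sub, neg_smul, ← sub_eq_add_neg]
  exact integral_smul _ _

lemma HasVanishingMoments.integral_mul_eq_integral_mul_sub_taylorPoly {n k : ℕ}
    {g : Euc n → ℂ} (hg : HasVanishingMoments k g) (hgi : Integrable g) {f : Euc n → ℂ}
    (hf : Continuous f) {M : ℝ} (hfM : ∀ w, ‖f w‖ ≤ M) (z : Euc n) (c : ℝ) :
    ∫ y, g y * f (z + c • y) = ∫ y, g y * (f (z + c • y) - taylorPoly f k z (c • y)) := by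
  obtain ⟨hTi, hT0⟩ := hg.integral_mul_taylorPoly_eq_zero f z c
  have hfi : Integrable fun y => g y * f (z + c • y) :=
    hgi.mul_bdd (by fun_prop) (Eventually.of_forall fun y => hfM _)
  simp only [mul_sub]
  rw [integral_sub hfi hTi, hT0, sub_zero]

lemma norm_conv_dil_le {n k N : ℕ} {f g : Euc n → ℂ} (hf_smooth : ContDiff ℝ k f)
    (hf_decay : ∀ α : Fin n → ℕ, (∑ i, α i) ≤ k →
      ∃ Cα : ℝ, ∀ x, ‖mderiv α f x‖ ≤ Cα / (1 + ‖x‖) ^ N)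
    (hg_meas : Measurable g) (hg_mom : HasVanishingMoments k g)
    (hg_decay : HasDecayOrder (N + k + n + 1) g) :
    ∃ A : ℝ, 0 ≤ A ∧ ∀ t : ℝ, 0 < t → t ≤ 1 → ∀ x : Euc n,
      ‖conv g (dil n t f) x‖ ≤ A * t ^ (n + k) / (1 + ‖t • x‖) ^ N := by
  have hgi : Integrable g := hg_decay.integrable (by omega) hg_meas
  obtain ⟨Cg, hCg⟩ := hg_decay
  have hCg0 : 0 ≤ Cg := by simpa using (norm_nonneg _).trans (hCg 0)
  obtain ⟨Mk, hMk0, hMk⟩ :=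
    norm_iteratedFDeriv_le_of_norm_mderiv_le hf_smooth fun α hα => hf_decay α hα.le
  obtain ⟨M₀, hM₀0, hM₀⟩ := norm_iteratedFDeriv_le_of_norm_mderiv_le (j := 0)
    (hf_smooth.of_le (by simp)) fun α hα => hf_decay α (by omega)
  have hfM (w : Euc n) : ‖f w‖ ≤ M₀ := by
    simpa using (hM₀ w).trans (div_le_self hM₀0 (one_le_pow₀ (by simp)))
  set J := ∫ y : Euc n, ((1 + ‖y‖) ^ (n + 1))⁻¹
  have hJ : Integrable fun y : Euc n => ((1 + ‖y‖) ^ (n + 1))⁻¹ :=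
    integrable_inv_one_add_norm_pow (by simp)
  refine ⟨Cg * Mk * J, by positivity, fun t ht ht1 x => ?_⟩
  set B := Cg * Mk * t ^ k / (1 + ‖t • x‖) ^ N
  have hbound (y : Euc n) : ‖g y * (f (t • x + (-t) • y) - taylorPoly f k (t • x) ((-t) • y))‖
      ≤ B * ((1 + ‖y‖) ^ (n + 1))⁻¹ := by
    have hv : ‖(-t) • y‖ = t * ‖y‖ := by simp [norm_smul, abs_of_pos ht]
    have hty : t * ‖y‖ ≤ ‖y‖ := mul_le_of_le_one_left (norm_nonneg y) ht1
    rw [norm_mul]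
    calc _ ≤ Cg / (1 + ‖y‖) ^ (N + k + n + 1)
          * (Mk * (1 + ‖y‖) ^ N / (1 + ‖t • x‖) ^ N * (t ^ k * (1 + ‖y‖) ^ k)) := by
          refine mul_le_mul (hCg y) ((norm_sub_taylorPoly_le_of_decay hf_smooth hMk _ _).trans ?_)
            (norm_nonneg _) (by positivity)
          rw [hv, mul_pow]
          gcongr
          linarith [norm_nonneg y]
      _ = B * ((1 + ‖y‖) ^ (n + 1))⁻¹ := by
          simp only [B, pow_add]
          field_simp
  rw [conv_dil_apply, hg_mom.integral_mul_eq_integral_mul_sub_taylorPoly hgi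
    hf_smooth.continuous hfM, norm_smul, Real.norm_of_nonneg (by positivity)]
  calc t ^ n * ‖∫ y, g y * (f (t • x + (-t) • y) - taylorPoly f k (t • x) ((-t) • y))‖
      ≤ t ^ n * ∫ y : Euc n, B * ((1 + ‖y‖) ^ (n + 1))⁻¹ := by
        gcongr
        exact norm_integral_le_of_norm_le (hJ.const_mul B) (Eventually.of_forall hbound)
    _ = Cg * Mk * J * t ^ (n + k) / (1 + ‖t • x‖) ^ N := by
        rw [integral_const_mul, pow_add]
        ring

section Scaling

variable {E F : Type*} [NormedAddCommGroup E] [NormedSpace ℝ E] [FiniteDimensional ℝ E]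
  [MeasurableSpace E] [BorelSpace E] {μ : Measure E} [μ.IsAddHaarMeasure] [NormedAddCommGroup F]

lemma eLpNorm_comp_smul (g : E → F) {r : ℝ} (hr : r ≠ 0) (p : ℝ≥0∞) :
    eLpNorm (fun x => g (r • x)) p μ
      = ENNReal.ofReal |r ^ Module.finrank ℝ E|⁻¹ ^ p.toReal⁻¹ * eLpNorm g p μ := by
  have hemb : MeasurableEmbedding (r • · : E → E) :=
    (Homeomorph.smulOfNeZero r hr).measurableEmbedding
  rw [show (fun x => g (r • x)) = g ∘ (r • ·) from rfl, ← hemb.eLpNorm_map_measure,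
    Measure.map_addHaar_smul μ hr, eLpNorm_smul_measure_of_ne_zero (by simp [hr])]
  simp

lemma memLp_inv_one_add_norm_pow {N : ℕ} {p : ℝ≥0∞}
    (hp : p = ⊤ ∨ (Module.finrank ℝ E : ℝ) < N * p.toReal) :
    MemLp (fun u : E => ((1 + ‖u‖) ^ N)⁻¹) p μ := by
  have hmeas : AEStronglyMeasurable (fun u : E => ((1 + ‖u‖) ^ N)⁻¹) μ := by fun_prop
  rcases hp with rfl | hp
  · refine memLp_top_of_bound hmeas 1 (Eventually.of_forall fun u => ?_)
    rw [norm_inv, norm_pow, Real.norm_of_nonneg (by positivity)]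
    exact inv_le_one_of_one_le₀ (one_le_pow₀ (by simp))
  have hp0 : 0 < p.toReal := pos_of_mul_pos_right ((Nat.cast_nonneg _).trans_lt hp) (by simp)
  obtain ⟨hp0', hptop⟩ := ENNReal.toReal_pos_iff.mp hp0
  refine (integrable_norm_rpow_iff hmeas hp0'.ne' hptop.ne).mp ?_
  refine (integrable_one_add_norm (μ := μ) hp).congr (Eventually.of_forall fun u => ?_)
  have h1 : (0 : ℝ) ≤ 1 + ‖u‖ := by positivity
  simp only [norm_inv, norm_pow, Real.norm_of_nonneg h1]
  rw [← Real.rpow_natCast, ← Real.rpow_neg h1, ← Real.rpow_mul h1, neg_mul]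

end Scaling

theorem statement1_general (n : ℕ) (k N : ℕ) (f g : Euc n → ℂ)
    (hf_smooth : ContDiff ℝ k f)
    (hf_decay : ∀ α : Fin n → ℕ, (∑ i, α i) ≤ k →
      ∃ Cα : ℝ, ∀ x, ‖mderiv α f x‖ ≤ Cα / (1 + ‖x‖) ^ N)
    (hg_meas : Measurable g)
    (hg_mom : HasVanishingMoments k g)
    (hg_decay : HasDecayOrder (N + k + n + 1) g)
    (p : ℝ≥0∞)
    (hNp : p = ⊤ ∨ (n : ℝ) < (N : ℝ) * p.toReal) :
    ∃ C' : ℝ, 0 < C' ∧ ∀ t : ℝ, 0 < t → t < 1 →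
      eLpNorm (conv g (dil n t f)) p volume
        ≤ ENNReal.ofReal (C' * t ^ ((k : ℝ) + (n : ℝ) * (1 - p.toReal⁻¹))) := by
  obtain ⟨A, hA0, hA⟩ := norm_conv_dil_le hf_smooth hf_decay hg_meas hg_mom hg_decay
  set ρ : Euc n → ℝ := fun u => ((1 + ‖u‖) ^ N)⁻¹
  have hρ : MemLp ρ p volume := memLp_inv_one_add_norm_pow (by simpa using hNp)
  refine ⟨A * (eLpNorm ρ p volume).toReal + 1, by positivity, fun t ht ht1 => ?_⟩
  have hexp : t ^ (n + k) * (t ^ n)⁻¹ ^ p.toReal⁻¹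
      = t ^ ((k : ℝ) + (n : ℝ) * (1 - p.toReal⁻¹)) := by
    rw [← Real.rpow_natCast, ← Real.rpow_natCast, ← Real.rpow_neg ht.le, ← Real.rpow_mul ht.le,
      ← Real.rpow_add ht]
    push_cast
    ring_nf
  calc eLpNorm (conv g (dil n t f)) p volume
      ≤ eLpNorm ((A * t ^ (n + k)) • fun x => ρ (t • x)) p volume :=
        eLpNorm_mono_real fun x => by simpa [ρ, div_eq_mul_inv] using hA t ht ht1.le x
    _ = ENNReal.ofReal
          (A * (eLpNorm ρ p volume).toReal * t ^ ((k : ℝ) + (n : ℝ) * (1 - p.toReal⁻¹))) := by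
        conv_lhs => rw [eLpNorm_const_smul, eLpNorm_comp_smul ρ ht.ne',
          ← ENNReal.ofReal_toReal hρ.eLpNorm_ne_top]
        rw [Real.enorm_of_nonneg (by positivity), finrank_euclideanSpace_fin,
          abs_of_pos (by positivity), ENNReal.ofReal_rpow_of_nonneg (by positivity) (by positivity),
          ← ENNReal.ofReal_mul (by positivity), ← ENNReal.ofReal_mul (by positivity), ← hexp]
        ring_nf
    _ ≤ _ := ENNReal.ofReal_le_ofReal (by gcongr; linarith)

/-- Lemma 3.12(a) of the paper (L^p estimate), for G = ℝⁿ: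
‖g ∗ D_t f‖_p ≤ C' t^{k + n(1 − 1/p)} for 0 < t < 1, provided N p > n
(which holds automatically for p = ∞). -/
theorem statement1 (n : ℕ) (hn : 1 ≤ n) (k N : ℕ) (f g : Euc n → ℂ)
    (hf_smooth : ContDiff ℝ k f)
    (hf_decay : ∀ α : Fin n → ℕ, (∑ i, α i) ≤ k →
      ∃ Cα : ℝ, ∀ x, ‖mderiv α f x‖ ≤ Cα / (1 + ‖x‖) ^ N)
    (hg_meas : Measurable g)
    (hg_mom : HasVanishingMoments k g)
    (hg_decay : HasDecayOrder (N + k + n + 1) g)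
    (p : ℝ≥0∞) (hp : 1 ≤ p)
    (hNp : p = ⊤ ∨ (n : ℝ) < (N : ℝ) * p.toReal) :
    ∃ C' : ℝ, 0 < C' ∧ ∀ t : ℝ, 0 < t → t < 1 →
      eLpNorm (conv g (dil n t f)) p volume
        ≤ ENNReal.ofReal (C' * t ^ ((k : ℝ) + (n : ℝ) * (1 - p.toReal⁻¹))) :=
  statement1_general n k N f g hf_smooth hf_decay hg_meas hg_mom hg_decay p hNp

end
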